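/- For real λ and real ξ > 0, the boundary value of -iξ ω₊(-1-iλξ, ξ) equals -2D(λ) - i(ξ - √π e^{-λ²}), where D(λ) = e^{-λ²} ∫₀^λ e^{t²} dt is the Dawson function; i.e., the principal value integral P.v.∫_ℝ w(v)/(v-λ) dv equals -2D(λ) for w(v) = e^{-v²}/√π. -/

import Mathlib

/-! Shifting by `λ` and pairing `u` with `-u` turns the truncated integral into
`-(e^{-λ²}/√π) ∫_{|u| ≥ ε} e^{-u²} sinh(2λu)/u du`. This integrand is integrable on all of `ℝ`,
so the limit `ε → 0⁺` is its full integral. Writing `sinh(2λu)/u = ∫₀^λ 2 cosh(2tu) dt` and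
swapping the integrals, the Gaussian integral `∫ e^{-u²} cosh(2tu) du = √π e^{t²}` gives
`∫ e^{-u²} sinh(2λu)/u du = 2√π ∫₀^λ e^{t²} dt`. -/

open MeasureTheory Real Filter

noncomputable def w (v : ℝ) : ℝ := Real.exp (-v ^ 2) / Real.sqrt Real.pi

/-- The Dawson function D(λ) = e^{-λ²} ∫₀^λ e^{t²} dt. -/
noncomputable def dawson (l : ℝ) : ℝ :=
  Real.exp (-l ^ 2) * ∫ t in (0 : ℝ)..l, Real.exp (t ^ 2)

open Set Function Topology

section PrincipalValue

variable {E : Type*} [NormedAddCommGroup E] [NormedSpace ℝ E]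

lemma measurableSet_le_abs (ε : ℝ) : MeasurableSet {x : ℝ | ε ≤ |x|} :=
  measurableSet_le measurable_const measurable_abs

lemma setIntegral_le_abs_sub_eq_comp_add_right (f : ℝ → E) (ε l : ℝ) :
    ∫ v in {x | ε ≤ |x - l|}, f v = ∫ u in {x | ε ≤ |x|}, f (u + l) := by
  have := (measurePreserving_add_right volume l).setIntegral_preimage_emb
    (measurableEmbedding_addRight l) f {x | ε ≤ |x - l|}
  simpa using this.symm

lemma setIntegral_le_abs_comp_neg (f : ℝ → E) (ε : ℝ) :
    ∫ u in {x | ε ≤ |x|}, f (-u) = ∫ u in {x | ε ≤ |x|}, f u := by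
  have := (Measure.measurePreserving_neg (volume : Measure ℝ)).setIntegral_preimage_emb
    (Homeomorph.neg ℝ).measurableEmbedding f {x | ε ≤ |x|}
  simpa using this

lemma setIntegral_le_abs_add_comp_neg {f : ℝ → E} {ε : ℝ} (hf : IntegrableOn f {x | ε ≤ |x|}) :
    ∫ x in {x | ε ≤ |x|}, (f x + f (-x)) = (2 : ℝ) • ∫ x in {x | ε ≤ |x|}, f x := by
  have hneg : IntegrableOn (fun x => f (-x)) {x | ε ≤ |x|} := by
    have := ((Measure.measurePreserving_neg (volume : Measure ℝ)).integrableOn_comp_preimage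
      (Homeomorph.neg ℝ).measurableEmbedding).2 hf
    simpa [comp_def] using this
  rw [integral_add hf hneg, setIntegral_le_abs_comp_neg, two_smul]

lemma tendsto_setIntegral_le_abs {f : ℝ → E} (hf : Integrable f) :
    Tendsto (fun ε => ∫ x in {x | ε ≤ |x|}, f x) (𝓝[>] 0) (𝓝 (∫ x, f x)) := by
  simp_rw [← integral_indicator (measurableSet_le_abs _)]
  refine tendsto_integral_filter_of_dominated_convergence (‖f ·‖)
    (.of_forall fun ε => hf.aestronglyMeasurable.indicator (measurableSet_le_abs ε))
    (.of_forall fun ε => .of_forall fun x => norm_indicator_le_norm_self _ _) hf.norm ?_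
  filter_upwards [Measure.ae_ne volume 0] with x hx
  refine tendsto_const_nhds.congr' ?_
  filter_upwards [nhdsWithin_le_nhds (Iio_mem_nhds (abs_pos.2 hx))] with ε hε
  exact (indicator_of_mem (s := {x | ε ≤ |x|}) (show ε ≤ |x| from le_of_lt hε) f).symm

end PrincipalValue

section Gaussian

lemma exp_neg_sq_mul_exp (t u : ℝ) :
    exp (-u ^ 2) * exp (2 * t * u) = exp (t ^ 2) * exp (-(u - t) ^ 2) := by
  rw [← exp_add, ← exp_add]; ring_nf

lemma integrable_exp_neg_sq_mul_exp (t : ℝ) :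
    Integrable fun u => exp (-u ^ 2) * exp (2 * t * u) := by
  simp_rw [exp_neg_sq_mul_exp]
  refine Integrable.const_mul ?_ _
  simpa using (integrable_exp_neg_mul_sq one_pos).comp_sub_right t

lemma integral_exp_neg_sq_mul_exp (t : ℝ) :
    ∫ u, exp (-u ^ 2) * exp (2 * t * u) = √π * exp (t ^ 2) := by
  have hgauss : ∫ u : ℝ, exp (-u ^ 2) = √π := by simpa using integral_gaussian 1
  simp_rw [exp_neg_sq_mul_exp, integral_const_mul,
    integral_sub_right_eq_self (fun u => exp (-u ^ 2)) t, hgauss, mul_comm]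

lemma exp_neg_sq_mul_cosh (t u : ℝ) : exp (-u ^ 2) * cosh (2 * t * u) =
    (exp (-u ^ 2) * exp (2 * t * u) + exp (-u ^ 2) * exp (2 * -t * u)) / 2 := by
  rw [cosh_eq]; ring_nf

lemma integrable_exp_neg_sq_mul_cosh (t : ℝ) :
    Integrable fun u => exp (-u ^ 2) * cosh (2 * t * u) := by
  simp_rw [exp_neg_sq_mul_cosh]
  exact ((integrable_exp_neg_sq_mul_exp t).add (integrable_exp_neg_sq_mul_exp (-t))).div_const 2

lemma integral_exp_neg_sq_mul_cosh (t : ℝ) :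
    ∫ u, exp (-u ^ 2) * cosh (2 * t * u) = √π * exp (t ^ 2) := by
  simp_rw [exp_neg_sq_mul_cosh, integral_div,
    integral_add (integrable_exp_neg_sq_mul_exp t) (integrable_exp_neg_sq_mul_exp (-t)),
    integral_exp_neg_sq_mul_exp, neg_sq]
  ring

end Gaussian

section SinhKernel

lemma integral_two_mul_cosh_mul (l : ℝ) {u : ℝ} (hu : u ≠ 0) :
    ∫ t in (0 : ℝ)..l, 2 * cosh (2 * t * u) = sinh (2 * l * u) / u := by
  have hderiv : ∀ t ∈ uIcc 0 l,
      HasDerivAt (fun t => sinh (2 * t * u) / u) (2 * cosh (2 * t * u)) t := by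
    intro t _
    have hlin : HasDerivAt (fun t => 2 * t * u) (2 * u) t := by
      simpa using ((hasDerivAt_id t).const_mul 2).mul_const u
    exact (hlin.sinh.div_const u).congr_deriv (by field_simp)
  rw [intervalIntegral.integral_eq_sub_of_hasDerivAt hderiv
    (Continuous.intervalIntegrable (by fun_prop) _ _)]
  simp

lemma integrable_exp_neg_sq_mul_cosh_prod (l : ℝ) :
    Integrable (uncurry fun t u => exp (-u ^ 2) * (2 * cosh (2 * t * u)))
      ((volume.restrict (uIoc 0 l)).prod volume) := by
  have : IsFiniteMeasure (volume.restrict (uIoc 0 l)) :=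
    isFiniteMeasure_restrict.2 measure_Ioc_lt_top.ne
  have hbound := (integrable_const (μ := volume.restrict (uIoc 0 l)) (1 : ℝ)).mul_prod
    ((integrable_exp_neg_sq_mul_cosh l).const_mul 2)
  refine hbound.mono' (Continuous.aestronglyMeasurable (by fun_prop)) ?_
  filter_upwards [Measure.quasiMeasurePreserving_fst.ae (ae_restrict_mem measurableSet_uIoc)]
    with ⟨t, u⟩ (ht : t ∈ uIoc 0 l)
  have htl : |t| ≤ |l| := by
    have := neg_abs_le l
    have := le_abs_self l
    rcases mem_uIoc.1 ht with ⟨_, _⟩ | ⟨_, _⟩ <;> exact abs_le.2 ⟨by linarith, by linarith⟩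
  have hcosh : cosh (2 * t * u) ≤ cosh (2 * l * u) := by
    rw [cosh_le_cosh, abs_mul, abs_mul (2 * l), abs_mul, abs_mul 2]
    gcongr
  simp only [uncurry_apply_pair, norm_mul, norm_eq_abs, abs_of_pos (exp_pos _),
    abs_of_pos (cosh_pos _), abs_two, one_mul]
  nlinarith [exp_pos (-u ^ 2)]

lemma intervalIntegral_exp_neg_sq_mul_two_mul_cosh (l : ℝ) {u : ℝ} (hu : u ≠ 0) :
    ∫ t in (0 : ℝ)..l, exp (-u ^ 2) * (2 * cosh (2 * t * u)) =
      exp (-u ^ 2) * sinh (2 * l * u) / u := by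
  rw [intervalIntegral.integral_const_mul, integral_two_mul_cosh_mul l hu, mul_div_assoc]

lemma integrable_exp_neg_sq_mul_sinh_div (l : ℝ) :
    Integrable fun u => exp (-u ^ 2) * sinh (2 * l * u) / u := by
  have hslice := (integrable_exp_neg_sq_mul_cosh_prod l).integral_prod_right.smul
    (if (0 : ℝ) ≤ l then (1 : ℝ) else -1)
  refine hslice.congr ?_
  filter_upwards [Measure.ae_ne volume 0] with u hu
  rw [Pi.smul_apply, ← intervalIntegral.intervalIntegral_eq_integral_uIoc]
  exact intervalIntegral_exp_neg_sq_mul_two_mul_cosh l hu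

lemma integral_exp_neg_sq_mul_sinh_div (l : ℝ) :
    ∫ u, exp (-u ^ 2) * sinh (2 * l * u) / u = 2 * √π * ∫ t in (0 : ℝ)..l, exp (t ^ 2) := by
  calc ∫ u, exp (-u ^ 2) * sinh (2 * l * u) / u
      = ∫ u, ∫ t in (0 : ℝ)..l, exp (-u ^ 2) * (2 * cosh (2 * t * u)) := by
        refine integral_congr_ae ?_
        filter_upwards [Measure.ae_ne volume 0] with u hu
        exact (intervalIntegral_exp_neg_sq_mul_two_mul_cosh l hu).symm
    _ = ∫ t in (0 : ℝ)..l, ∫ u, exp (-u ^ 2) * (2 * cosh (2 * t * u)) :=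
        (intervalIntegral_integral_swap (integrable_exp_neg_sq_mul_cosh_prod l)).symm
    _ = ∫ t in (0 : ℝ)..l, 2 * √π * exp (t ^ 2) := by
        simp_rw [mul_left_comm (exp _) 2, integral_const_mul, integral_exp_neg_sq_mul_cosh,
          mul_assoc]
    _ = 2 * √π * ∫ t in (0 : ℝ)..l, exp (t ^ 2) := intervalIntegral.integral_const_mul _ _

end SinhKernel

section GaussianPrincipalValue

lemma integrable_w : Integrable w := by
  show Integrable fun v => exp (-v ^ 2) / √π
  simpa using (integrable_exp_neg_mul_sq one_pos).div_const √π

lemma integrableOn_w_add_div (l : ℝ) {ε : ℝ} (hε : 0 < ε) :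
    IntegrableOn (fun u => w (u + l) / u) {x | ε ≤ |x|} := by
  simp_rw [div_eq_inv_mul]
  refine (integrable_w.comp_add_right l).integrableOn.bdd_mul (c := ε⁻¹)
    (measurable_inv.aestronglyMeasurable) ?_
  filter_upwards [ae_restrict_mem (measurableSet_le_abs ε)] with u (hu : ε ≤ |u|)
  rw [norm_inv, norm_eq_abs]
  exact inv_anti₀ hε hu

lemma w_add_div_add_w_neg_add_div (l u : ℝ) :
    w (u + l) / u + w (-u + l) / -u =
      -2 * exp (-l ^ 2) / √π * (exp (-u ^ 2) * sinh (2 * l * u) / u) := by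
  have hplus : exp (-(u + l) ^ 2) = exp (-u ^ 2) * exp (-l ^ 2) * exp (-(2 * l * u)) := by
    rw [← exp_add, ← exp_add]; ring_nf
  have hminus : exp (-(-u + l) ^ 2) = exp (-u ^ 2) * exp (-l ^ 2) * exp (2 * l * u) := by
    rw [← exp_add, ← exp_add]; ring_nf
  rw [w, w, hplus, hminus, sinh_eq]
  ring

lemma setIntegral_w_div_sub (l : ℝ) {ε : ℝ} (hε : 0 < ε) :
    ∫ v in {x | ε ≤ |x - l|}, w v / (v - l) =
      -exp (-l ^ 2) / √π * ∫ u in {x | ε ≤ |x|}, exp (-u ^ 2) * sinh (2 * l * u) / u := by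
  have hsymm := setIntegral_le_abs_add_comp_neg (integrableOn_w_add_div l hε)
  simp_rw [w_add_div_add_w_neg_add_div, integral_const_mul, smul_eq_mul] at hsymm
  rw [setIntegral_le_abs_sub_eq_comp_add_right]
  simp only [add_sub_cancel_right]
  linear_combination -hsymm / 2

end GaussianPrincipalValue

/-- for every real λ, the principal value
P.v.∫ w(v)/(v-λ) dv equals -2 D(λ), where D is the Dawson function. -/
theorem stmt15 (l : ℝ) :
    Tendsto (fun ε : ℝ => ∫ v in {x : ℝ | ε ≤ |x - l|}, w v / (v - l))
      (nhdsWithin 0 (Set.Ioi 0)) (nhds (-2 * dawson l)) := by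
  have hlim := (tendsto_setIntegral_le_abs (integrable_exp_neg_sq_mul_sinh_div l)).const_mul
    (-exp (-l ^ 2) / √π)
  have hvalue :
      -exp (-l ^ 2) / √π * ∫ u, exp (-u ^ 2) * sinh (2 * l * u) / u = -2 * dawson l := by
    rw [integral_exp_neg_sq_mul_sinh_div, dawson]
    field_simp
  rw [hvalue] at hlim
  refine hlim.congr' ?_
  filter_upwards [self_mem_nhdsWithin] with ε (hε : 0 < ε)
  exact (setIntegral_w_div_sub l hε).symm
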